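/- arXiv:1112.2309 — 4 statements merged into one kernel-verified Lean document; each statement's English description precedes it below -/
import Mathlib

section
/- Let a be a C^1 convex real function and suppose a is C^{2n} near z in (-M,M) with a''(z) = ... = a^{(2n-1)}(z) = 0 and a^{(2n)}(z) > 0, and a^{(2n)}(t) ≥ λ > 0 on [z-ρ, z+ρ] ⊂ (-M,M). Then for all z-ρ ≤ w ≤ v ≤ z+ρ one has a'(v) - a'(w) ≥ (λ / (2^{2n-1} (2n-1)!)) (v-w)^{2n-1}. -/
open Set MeasureTheory

lemma halfpow_aux (m : ℕ) (hm : Odd m) (b a : ℝ) (hba : b ≤ a) (hab : 0 ≤ a + b) :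
    ((a - b) / 2) ^ m ≤ a ^ m - b ^ m := by
  set e := (a - b) / 2 with he
  have he0 : 0 ≤ e := by simp only [he]; linarith
  have hae : e ≤ a := by simp only [he]; linarith
  rcases le_or_gt b 0 with hb | hb
  · have h1 : e ^ m ≤ a ^ m := pow_le_pow_left₀ he0 hae m
    have h2 : b ^ m ≤ 0 := hm.pow_nonpos hb
    linarith
  · have h1 : b ^ m + e ^ m ≤ (b + e) ^ m :=
      pow_add_pow_le hb.le he0 hm.pos.ne'
    have h2 : (b + e) ^ m ≤ a ^ m :=
      pow_le_pow_left₀ (by linarith) (by simp only [he]; linarith) m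
    linarith

lemma halfpow (m : ℕ) (hm : Odd m) (b a : ℝ) (hba : b ≤ a) :
    ((a - b) / 2) ^ m ≤ a ^ m - b ^ m := by
  rcases le_or_gt 0 (a + b) with h | h
  · exact halfpow_aux m hm b a hba h
  · have := halfpow_aux m hm (-a) (-b) (by linarith) (by linarith)
    rw [hm.neg_pow, hm.neg_pow, show (-b - -a) = a - b by ring] at this
    linarith

theorem stmt0 (a : ℝ → ℝ) (n : ℕ) (M ρ lam z : ℝ)
    (hn : 1 ≤ n) (hM : 0 < M) (hρ : 0 < ρ) (hlam : 0 < lam)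
    (ha1 : ContDiff ℝ 1 a) (hconv : ConvexOn ℝ Set.univ a)
    (hz : z ∈ Set.Ioo (-M) M)
    (hsub : Set.Icc (z - ρ) (z + ρ) ⊆ Set.Ioo (-M) M)
    (ha2n : ContDiffOn ℝ (2 * n) a (Set.Icc (z - ρ) (z + ρ)))
    (hvanish : ∀ k : ℕ, 2 ≤ k → k ≤ 2 * n - 1 →
      iteratedDerivWithin k a (Set.Icc (z - ρ) (z + ρ)) z = 0)
    (hpos : 0 < iteratedDerivWithin (2 * n) a (Set.Icc (z - ρ) (z + ρ)) z)
    (hlow : ∀ t ∈ Set.Icc (z - ρ) (z + ρ),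
      lam ≤ iteratedDerivWithin (2 * n) a (Set.Icc (z - ρ) (z + ρ)) t) :
    ∀ w v : ℝ, z - ρ ≤ w → w ≤ v → v ≤ z + ρ →
      deriv a v - deriv a w ≥
        lam / (2 ^ (2 * n - 1) * (Nat.factorial (2 * n - 1))) * (v - w) ^ (2 * n - 1) := by
  obtain ⟨p, hp⟩ : ∃ p, 2 * n = p + 2 := ⟨2 * n - 2, by omega⟩
  set S := Set.Icc (z - ρ) (z + ρ) with hSdef
  have hzρ : z - ρ < z + ρ := by linarith
  have hU : UniqueDiffOn ℝ S := uniqueDiffOn_Icc hzρ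
  have hIooS : Set.Ioo (z - ρ) (z + ρ) ⊆ S := Set.Ioo_subset_Icc_self
  have hnhds : ∀ x ∈ Set.Ioo (z - ρ) (z + ρ), S ∈ nhds x := fun x hx =>
    Filter.mem_of_superset (isOpen_Ioo.mem_nhds hx) hIooS
  have hderiv : ∀ j, j + 1 ≤ p + 2 → ∀ x ∈ Set.Ioo (z - ρ) (z + ρ),
      HasDerivAt (iteratedDerivWithin j a S) (iteratedDerivWithin (j + 1) a S x) x := by
    intro j hj x hx
    have hdiff : DifferentiableOn ℝ (iteratedDerivWithin j a S) S :=
      ha2n.differentiableOn_iteratedDerivWithin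
        (by exact_mod_cast (by omega : j < 2 * n)) hU
    have hx' : x ∈ S := hIooS hx
    have h1 : DifferentiableAt ℝ (iteratedDerivWithin j a S) x :=
      (hdiff x hx').differentiableAt (hnhds x hx)
    have h2 : deriv (iteratedDerivWithin j a S) x = iteratedDerivWithin (j + 1) a S x := by
      rw [← derivWithin_of_mem_nhds (hnhds x hx)]
      rw [iteratedDerivWithin_succ]
    rw [← h2]; exact h1.hasDerivAt
  have hcont : ∀ j, j ≤ p + 2 → ContinuousOn (iteratedDerivWithin j a S) S := fun j hj =>
    ha2n.continuousOn_iteratedDerivWithin (by exact_mod_cast (by omega : j ≤ 2 * n)) hU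
  have hpolyR : ∀ (i : ℕ) (x : ℝ),
      HasDerivAt (fun y => lam * (y - z) ^ (i + 1) / (i + 1).factorial)
        (lam * (x - z) ^ i / i.factorial) x := by
    intro i x
    have h1 : HasDerivAt (fun y : ℝ => (y - z) ^ (i + 1))
        ((i + 1 : ℕ) * (x - z) ^ (i + 1 - 1) * 1) x :=
      (((hasDerivAt_id x).sub_const z)).pow (i + 1)
    have h2 := (h1.const_mul lam).div_const ((i + 1).factorial : ℝ)
    refine h2.congr_deriv ?_
    rw [Nat.factorial_succ]
    have hf : (i.factorial : ℝ) ≠ 0 := by positivity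
    push_cast
    field_simp
  have hpolyL : ∀ (i : ℕ) (x : ℝ),
      HasDerivAt (fun y => lam * (z - y) ^ (i + 1) / (i + 1).factorial)
        (-(lam * (z - x) ^ i / i.factorial)) x := by
    intro i x
    have h1 : HasDerivAt (fun y : ℝ => (z - y) ^ (i + 1))
        ((i + 1 : ℕ) * (z - x) ^ (i + 1 - 1) * (-1)) x := by
      have h0 : HasDerivAt (fun y : ℝ => z - y) (-1) x := by
        simpa using (hasDerivAt_id x).const_sub z
      exact h0.pow (i + 1)
    have h2 := (h1.const_mul lam).div_const ((i + 1).factorial : ℝ)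
    refine h2.congr_deriv ?_
    rw [Nat.factorial_succ]
    have hf : (i.factorial : ℝ) ≠ 0 := by positivity
    push_cast
    field_simp
  have hcR : ∀ i : ℕ, Continuous (fun y : ℝ => lam * (y - z) ^ (i + 1) / ((i + 1).factorial : ℝ)) :=
    fun i => (continuous_const.mul ((continuous_id.sub continuous_const).pow _)).div_const _
  have hcL : ∀ i : ℕ, Continuous (fun y : ℝ => lam * (z - y) ^ (i + 1) / ((i + 1).factorial : ℝ)) :=
    fun i => (continuous_const.mul ((continuous_const.sub continuous_id).pow _)).div_const _
  have key : ∀ i j, i + j = p →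
      (∀ x ∈ Set.Icc z (z + ρ),
        lam * (x - z) ^ i / i.factorial ≤ iteratedDerivWithin (j + 2) a S x) ∧
      (∀ x ∈ Set.Icc (z - ρ) z,
        lam * (z - x) ^ i / i.factorial ≤ (-1) ^ i * iteratedDerivWithin (j + 2) a S x) := by
    intro i
    induction i with
    | zero =>
      intro j hj
      have hjp : j = p := by omega
      subst hjp
      have hbase : ∀ x ∈ S, lam ≤ iteratedDerivWithin (j + 2) a S x := by
        intro x hx
        have := hlow x hx
        rwa [hp] at this
      constructor
      · intro x hx
        have hxS : x ∈ S := ⟨by linarith [hx.1], hx.2⟩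
        simpa using hbase x hxS
      · intro x hx
        have hxS : x ∈ S := ⟨hx.1, by linarith [hx.2]⟩
        simpa using hbase x hxS
    | succ i ih =>
      intro j hj
      obtain ⟨A0, B0⟩ := ih (j + 1) (by omega)
      have A : ∀ x ∈ Set.Icc z (z + ρ),
          lam * (x - z) ^ i / i.factorial ≤ iteratedDerivWithin (j + 2 + 1) a S x := A0
      have B : ∀ x ∈ Set.Icc (z - ρ) z,
          lam * (z - x) ^ i / i.factorial ≤ (-1) ^ i * iteratedDerivWithin (j + 2 + 1) a S x := B0
      have hvan : iteratedDerivWithin (j + 2) a S z = 0 :=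
        hvanish (j + 2) (by omega) (by omega)
      constructor
      · -- right side
        have hmono : MonotoneOn (fun x => iteratedDerivWithin (j + 2) a S x
            - lam * (x - z) ^ (i + 1) / (i + 1).factorial) (Set.Icc z (z + ρ)) := by
          apply monotoneOn_of_deriv_nonneg (convex_Icc _ _)
          · apply ContinuousOn.sub
            · exact (hcont (j + 2) (by omega)).mono
                (Set.Icc_subset_Icc (by linarith) le_rfl)
            · exact (hcR i).continuousOn
          · intro x hx
            rw [interior_Icc] at hx
            have hx' : x ∈ Set.Ioo (z - ρ) (z + ρ) := ⟨by linarith [hx.1], hx.2⟩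
            exact (((hderiv (j + 2) (by omega) x hx').sub
              (hpolyR i x)).differentiableAt).differentiableWithinAt
          · intro x hx
            rw [interior_Icc] at hx
            have hx' : x ∈ Set.Ioo (z - ρ) (z + ρ) := ⟨by linarith [hx.1], hx.2⟩
            rw [(show HasDerivAt (fun x => iteratedDerivWithin (j + 2) a S x
              - lam * (x - z) ^ (i + 1) / (i + 1).factorial) _ x from
              (hderiv (j + 2) (by omega) x hx').sub (hpolyR i x)).deriv]
            have hA := A x ⟨hx.1.le, hx.2.le⟩
            linarith
        intro x hx
        have h0 : iteratedDerivWithin (j + 2) a S z - lam * (z - z) ^ (i + 1) / (i + 1).factorial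
            ≤ iteratedDerivWithin (j + 2) a S x - lam * (x - z) ^ (i + 1) / (i + 1).factorial :=
          hmono (Set.left_mem_Icc.mpr (by linarith)) hx hx.1
        rw [hvan, sub_self, zero_pow (Nat.succ_ne_zero i)] at h0
        simp only [mul_zero, zero_div, zero_sub, neg_nonpos] at h0
        linarith
      · -- left side
        have hanti : AntitoneOn (fun x => (-1) ^ (i + 1) * iteratedDerivWithin (j + 2) a S x
            - lam * (z - x) ^ (i + 1) / (i + 1).factorial) (Set.Icc (z - ρ) z) := by
          apply antitoneOn_of_deriv_nonpos (convex_Icc _ _)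
          · apply ContinuousOn.sub
            · exact (((hcont (j + 2) (by omega)).mono
                (Set.Icc_subset_Icc le_rfl (by linarith))).const_smul ((-1 : ℝ) ^ (i + 1)))
            · exact (hcL i).continuousOn
          · intro x hx
            rw [interior_Icc] at hx
            have hx' : x ∈ Set.Ioo (z - ρ) (z + ρ) := ⟨hx.1, by linarith [hx.2]⟩
            exact ((((hderiv (j + 2) (by omega) x hx').const_mul ((-1 : ℝ) ^ (i + 1))).sub
              (hpolyL i x)).differentiableAt).differentiableWithinAt
          · intro x hx
            rw [interior_Icc] at hx
            have hx' : x ∈ Set.Ioo (z - ρ) (z + ρ) := ⟨hx.1, by linarith [hx.2]⟩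
            rw [(show HasDerivAt (fun x => (-1 : ℝ) ^ (i + 1) * iteratedDerivWithin (j + 2) a S x
              - lam * (z - x) ^ (i + 1) / (i + 1).factorial) _ x from
              ((hderiv (j + 2) (by omega) x hx').const_mul ((-1 : ℝ) ^ (i + 1))).sub
              (hpolyL i x)).deriv]
            have hB := B x ⟨hx.1.le, hx.2.le⟩
            have hsign : ((-1 : ℝ)) ^ (i + 1) = -(-1 : ℝ) ^ i := by ring
            rw [hsign]
            have hrw : -(-1 : ℝ) ^ i * iteratedDerivWithin (j + 2 + 1) a S x
                = -((-1 : ℝ) ^ i * iteratedDerivWithin (j + 2 + 1) a S x) := by ring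
            rw [hrw]
            linarith
        intro x hx
        have h0 : (-1) ^ (i + 1) * iteratedDerivWithin (j + 2) a S z
              - lam * (z - z) ^ (i + 1) / (i + 1).factorial
            ≤ (-1) ^ (i + 1) * iteratedDerivWithin (j + 2) a S x
              - lam * (z - x) ^ (i + 1) / (i + 1).factorial :=
          hanti hx (Set.right_mem_Icc.mpr (by linarith)) hx.2
        rw [hvan, sub_self, zero_pow (Nat.succ_ne_zero i)] at h0
        simp only [mul_zero, zero_div, mul_zero, sub_zero] at h0
        linarith
  obtain ⟨Afin, Bfin⟩ := key p 0 (by omega)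
  have hpe : Even p := by
    obtain ⟨q, hq⟩ : ∃ q, p = 2 * q := ⟨n - 1, by omega⟩
    exact ⟨q, by omega⟩
  have hD2 : ∀ x ∈ Set.Ioo (z - ρ) (z + ρ),
      lam * (x - z) ^ p / p.factorial ≤ iteratedDerivWithin (0 + 2) a S x := by
    intro x hx
    rcases le_total z x with h | h
    · exact Afin x ⟨h, hx.2.le⟩
    · have hB := Bfin x ⟨hx.1.le, h⟩
      rw [show z - x = -(x - z) by ring, hpe.neg_pow, hpe.neg_one_pow, one_mul] at hB
      exact hB
  have hda : ∀ x ∈ Set.Ioo (z - ρ) (z + ρ),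
      HasDerivAt (deriv a) (iteratedDerivWithin (0 + 2) a S x) x := by
    intro x hx
    have h1 := hderiv 1 (by omega) x hx
    apply HasDerivAt.congr_of_eventuallyEq h1
    filter_upwards [isOpen_Ioo.mem_nhds hx] with y hy
    rw [iteratedDerivWithin_one, derivWithin_of_mem_nhds (hnhds y hy)]
  have hphi : MonotoneOn (fun x => deriv a x - lam * (x - z) ^ (p + 1) / (p + 1).factorial) S := by
    apply monotoneOn_of_deriv_nonneg (convex_Icc _ _)
    · apply ContinuousOn.sub
      · exact (ha1.continuous_deriv le_rfl).continuousOn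
      · exact (hcR p).continuousOn
    · intro x hx
      rw [interior_Icc] at hx
      exact (((hda x hx).sub (hpolyR p x)).differentiableAt).differentiableWithinAt
    · intro x hx
      rw [interior_Icc] at hx
      rw [(show HasDerivAt (fun x => deriv a x - lam * (x - z) ^ (p + 1) / (p + 1).factorial) _ x
        from (hda x hx).sub (hpolyR p x)).deriv]
      linarith [hD2 x hx]
  intro w v hw hwv hv
  have hwS : w ∈ S := ⟨hw, by linarith⟩
  have hvS : v ∈ S := ⟨by linarith, hv⟩
  have h0 : deriv a w - lam * (w - z) ^ (p + 1) / (p + 1).factorial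
      ≤ deriv a v - lam * (v - z) ^ (p + 1) / (p + 1).factorial := hphi hwS hvS hwv
  have hodd : Odd (p + 1) := hpe.add_one
  have halg := halfpow (p + 1) hodd (w - z) (v - z) (by linarith)
  rw [show v - z - (w - z) = v - w by ring] at halg
  have h2n1 : 2 * n - 1 = p + 1 := by omega
  rw [ge_iff_le, h2n1]
  have hfne : ((p + 1).factorial : ℝ) ≠ 0 := by positivity
  have hc : lam / (2 ^ (p + 1) * ((p + 1).factorial : ℝ)) * (v - w) ^ (p + 1)
      = lam / ((p + 1).factorial : ℝ) * ((v - w) / 2) ^ (p + 1) := by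
    rw [div_pow, div_mul_eq_mul_div, ← mul_div_assoc, div_mul_eq_mul_div, div_div,
      mul_comm ((2 : ℝ) ^ (p + 1)) (((p + 1).factorial : ℝ))]
  rw [hc]
  have h1 : lam / ((p + 1).factorial : ℝ) * ((v - w) / 2) ^ (p + 1)
      ≤ lam / ((p + 1).factorial : ℝ) * ((v - z) ^ (p + 1) - (w - z) ^ (p + 1)) :=
    mul_le_mul_of_nonneg_left halg (by positivity)
  have heq : lam / ((p + 1).factorial : ℝ) * ((v - z) ^ (p + 1) - (w - z) ^ (p + 1))
      = lam * (v - z) ^ (p + 1) / (p + 1).factorial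
        - lam * (w - z) ^ (p + 1) / (p + 1).factorial := by ring
  linarith [heq ▸ h1]
end

section
/- Let a, η ∈ C^1(ℝ) be convex and let q(v) = ∫_0^v η'(w) a'(w) dw. Then for all v, w ∈ ℝ: (w - v)(q(w) - q(v)) - (a(w) - a(v))(η(w) - η(v)) ≥ 0. -/
open intervalIntegral MeasureTheory

theorem stmt11 (a η q : ℝ → ℝ)
    (ha : ContDiff ℝ 1 a) (hη : ContDiff ℝ 1 η)
    (hconva : ConvexOn ℝ Set.univ a) (hconvη : ConvexOn ℝ Set.univ η)
    (hq : ∀ v : ℝ, q v = ∫ t in (0 : ℝ)..v, deriv η t * deriv a t) :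
    ∀ v w : ℝ, (w - v) * (q w - q v) - (a w - a v) * (η w - η v) ≥ 0 := by
  have hda : Differentiable ℝ a := ha.differentiable one_ne_zero
  have hdη : Differentiable ℝ η := hη.differentiable one_ne_zero
  have ha' : Continuous (deriv a) := ha.continuous_deriv le_rfl
  have hη' : Continuous (deriv η) := hη.continuous_deriv le_rfl
  have hma : Monotone (deriv a) := by
    have := hconva.monotoneOn_deriv (fun x _ => (hda x))
    exact monotoneOn_univ.mp this
  have hmη : Monotone (deriv η) := by
    have := hconvη.monotoneOn_deriv (fun x _ => (hdη x))
    exact monotoneOn_univ.mp this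
  -- FTC pieces
  have hint_a : ∀ u x : ℝ, (∫ t in u..x, deriv a t) = a x - a u := fun u x =>
    integral_deriv_eq_sub (fun t _ => hda t) (ha'.intervalIntegrable u x)
  have hint_η : ∀ u x : ℝ, (∫ t in u..x, deriv η t) = η x - η u := fun u x =>
    integral_deriv_eq_sub (fun t _ => hdη t) (hη'.intervalIntegrable u x)
  have hcqa : Continuous (fun t => deriv η t * deriv a t) := hη'.mul ha'
  have hint_q : ∀ u x : ℝ, (∫ t in u..x, deriv η t * deriv a t) = q x - q u := by
    intro u x
    rw [hq x, hq u, ← intervalIntegral.integral_interval_sub_left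
      (hcqa.intervalIntegrable 0 x) (hcqa.intervalIntegrable 0 u)]
  have hq' : ∀ x : ℝ, HasDerivAt q (deriv η x * deriv a x) x := by
    intro x
    have hqe : q = fun u => ∫ t in (0:ℝ)..u, deriv η t * deriv a t := funext hq
    rw [hqe]
    exact intervalIntegral.integral_hasDerivAt_right (hcqa.intervalIntegrable 0 x)
      hcqa.aestronglyMeasurable.stronglyMeasurableAtFilter hcqa.continuousAt
  intro v w
  set F : ℝ → ℝ := fun x => (x - v) * (q x - q v) - (a x - a v) * (η x - η v) with hF
  have hFv : F v = 0 := by simp [hF]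
  have hFd : ∀ x : ℝ, HasDerivAt F
      (∫ t in v..x, (deriv η x - deriv η t) * (deriv a x - deriv a t)) x := by
    intro x
    have h1 : HasDerivAt (fun x => (x - v) * (q x - q v))
        (1 * (q x - q v) + (x - v) * (deriv η x * deriv a x)) x :=
      ((hasDerivAt_id x).sub_const v).mul ((hq' x).sub_const (q v))
    have h2 : HasDerivAt (fun x => (a x - a v) * (η x - η v))
        (deriv a x * (η x - η v) + (a x - a v) * deriv η x) x :=
      (((hda x).hasDerivAt.sub_const (a v)).mul
        ((hdη x).hasDerivAt.sub_const (η v)))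
    have h3 := h1.sub h2
    refine h3.congr_deriv ?_
    symm
    have e1 : (∫ t in v..x, (deriv η x - deriv η t) * (deriv a x - deriv a t))
        = ∫ t in v..x, (deriv η x * deriv a x - deriv η x * deriv a t
            - deriv a x * deriv η t + deriv η t * deriv a t) := by
      congr 1; funext t; ring
    rw [e1]
    have i1 : IntervalIntegrable (fun t : ℝ => deriv η x * deriv a x) volume v x :=
      intervalIntegrable_const
    have i2 : IntervalIntegrable (fun t : ℝ => deriv η x * deriv a t) volume v x :=
      (continuous_const.mul ha').intervalIntegrable v x
    have i3 : IntervalIntegrable (fun t : ℝ => deriv a x * deriv η t) volume v x :=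
      (continuous_const.mul hη').intervalIntegrable v x
    have i4 : IntervalIntegrable (fun t : ℝ => deriv η t * deriv a t) volume v x :=
      hcqa.intervalIntegrable v x
    rw [intervalIntegral.integral_add ((i1.sub i2).sub i3) i4,
        intervalIntegral.integral_sub (i1.sub i2) i3,
        intervalIntegral.integral_sub i1 i2,
        intervalIntegral.integral_const,
        intervalIntegral.integral_const_mul, intervalIntegral.integral_const_mul,
        hint_a, hint_η, hint_q]
    simp only [smul_eq_mul]
    ring
  have hFdiff : Differentiable ℝ F := fun x => (hFd x).differentiableAt
  rcases le_total v w with hvw | hwv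
  · -- F monotone on [v, w]
    have hmono : MonotoneOn F (Set.Icc v w) := by
      apply monotoneOn_of_deriv_nonneg (convex_Icc v w) hFdiff.continuous.continuousOn
        hFdiff.differentiableOn
      intro x hx
      rw [(hFd x).deriv]
      have hvx : v ≤ x := (interior_subset hx).1
      apply intervalIntegral.integral_nonneg hvx
      intro t ht
      exact mul_nonneg (sub_nonneg.2 (hmη ht.2)) (sub_nonneg.2 (hma ht.2))
    have := hmono (Set.left_mem_Icc.2 hvw) (Set.right_mem_Icc.2 hvw) hvw
    rw [hFv] at this
    exact this
  · -- F antitone on [w, v]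
    have hanti : AntitoneOn F (Set.Icc w v) := by
      apply antitoneOn_of_deriv_nonpos (convex_Icc w v) hFdiff.continuous.continuousOn
        hFdiff.differentiableOn
      intro x hx
      rw [(hFd x).deriv]
      have hxv : x ≤ v := (interior_subset hx).2
      rw [intervalIntegral.integral_symm x v, neg_nonpos]
      apply intervalIntegral.integral_nonneg hxv
      intro t ht
      have h1 : deriv η x - deriv η t ≤ 0 := sub_nonpos.2 (hmη ht.1)
      have h2 : deriv a x - deriv a t ≤ 0 := sub_nonpos.2 (hma ht.1)
      exact mul_nonneg_of_nonpos_of_nonpos h1 h2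
    have := hanti (Set.left_mem_Icc.2 hwv) (Set.right_mem_Icc.2 hwv) hwv
    rw [hFv] at this
    exact this
end

section
/- Let a, η ∈ C^1(ℝ) and q(v) = ∫_0^v η'(w) a'(w) dw. Then for all v, w ∈ ℝ: (w-v)(q(w)-q(v)) - (a(w)-a(v))(η(w)-η(v)) = (1/2) ∫_v^w ∫_v^w (η'(ζ) - η'(ξ))(a'(ζ) - a'(ξ)) dξ dζ. -/
theorem stmt12 (a η q : ℝ → ℝ)
    (ha : ContDiff ℝ 1 a) (hη : ContDiff ℝ 1 η)
    (hq : ∀ v : ℝ, q v = ∫ t in (0 : ℝ)..v, deriv η t * deriv a t) :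
    ∀ v w : ℝ,
      (w - v) * (q w - q v) - (a w - a v) * (η w - η v)
        = (1 / 2) * ∫ ζ in v..w, ∫ ξ in v..w,
            (deriv η ζ - deriv η ξ) * (deriv a ζ - deriv a ξ) := by
  intro v w
  have hηc : Continuous (deriv η) := hη.continuous_deriv le_rfl
  have hac : Continuous (deriv a) := ha.continuous_deriv le_rfl
  set I := ∫ t in v..w, deriv η t * deriv a t with hI
  have hA : (∫ t in v..w, deriv a t) = a w - a v :=
    intervalIntegral.integral_deriv_eq_sub
      (fun x _ => (ha.differentiable one_ne_zero).differentiableAt)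
      (hac.intervalIntegrable v w)
  have hE : (∫ t in v..w, deriv η t) = η w - η v :=
    intervalIntegral.integral_deriv_eq_sub
      (fun x _ => (hη.differentiable one_ne_zero).differentiableAt)
      (hηc.intervalIntegrable v w)
  have hq' : q w - q v = I := by
    rw [hq, hq, hI,
      ← intervalIntegral.integral_add_adjacent_intervals (f := fun t => deriv η t * deriv a t)
        ((hηc.mul hac).intervalIntegrable 0 v) ((hηc.mul hac).intervalIntegrable v w)]
    ring
  have inner : ∀ ζ : ℝ, (∫ ξ in v..w, (deriv η ζ - deriv η ξ) * (deriv a ζ - deriv a ξ))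
      = (w - v) * (deriv η ζ * deriv a ζ) - deriv η ζ * (a w - a v)
        - deriv a ζ * (η w - η v) + I := by
    intro ζ
    have h1 : ∀ ξ : ℝ, (deriv η ζ - deriv η ξ) * (deriv a ζ - deriv a ξ)
        = deriv η ζ * deriv a ζ - deriv η ζ * deriv a ξ - deriv a ζ * deriv η ξ
          + deriv η ξ * deriv a ξ := fun ξ => by ring
    simp_rw [h1]
    rw [intervalIntegral.integral_add
        (f := fun ξ => deriv η ζ * deriv a ζ - deriv η ζ * deriv a ξ - deriv a ζ * deriv η ξ)
        (g := fun ξ => deriv η ξ * deriv a ξ)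
        ((((continuous_const.sub (continuous_const.mul hac)).sub
          (continuous_const.mul hηc))).intervalIntegrable v w)
        ((hηc.mul hac).intervalIntegrable v w),
      intervalIntegral.integral_sub
        (f := fun ξ => deriv η ζ * deriv a ζ - deriv η ζ * deriv a ξ)
        (g := fun ξ => deriv a ζ * deriv η ξ)
        ((continuous_const.sub (continuous_const.mul hac)).intervalIntegrable v w)
        ((continuous_const.mul hηc).intervalIntegrable v w),
      intervalIntegral.integral_sub
        (f := fun _ => deriv η ζ * deriv a ζ) (g := fun ξ => deriv η ζ * deriv a ξ)
        (continuous_const.intervalIntegrable v w)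
        ((continuous_const.mul hac).intervalIntegrable v w),
      intervalIntegral.integral_const,
      intervalIntegral.integral_const_mul, intervalIntegral.integral_const_mul, hA, hE]
    simp only [smul_eq_mul]
    rfl
  rw [intervalIntegral.integral_congr (fun ζ _ => inner ζ)]
  have hcont1 : Continuous fun ζ => (w - v) * (deriv η ζ * deriv a ζ)
      - deriv η ζ * (a w - a v) - deriv a ζ * (η w - η v) :=
    ((continuous_const.mul (hηc.mul hac)).sub (hηc.mul continuous_const)).sub
      (hac.mul continuous_const)
  rw [intervalIntegral.integral_add (hcont1.intervalIntegrable v w)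
      (continuous_const.intervalIntegrable v w),
    intervalIntegral.integral_sub
      (f := fun x => (w - v) * (deriv η x * deriv a x) - deriv η x * (a w - a v))
      (g := fun x => deriv a x * (η w - η v))
      (((continuous_const.mul (hηc.mul hac)).sub (hηc.mul continuous_const)).intervalIntegrable v w)
      ((hac.mul continuous_const).intervalIntegrable v w),
    intervalIntegral.integral_sub
      (f := fun x => (w - v) * (deriv η x * deriv a x)) (g := fun x => deriv η x * (a w - a v))
      ((continuous_const.mul (hηc.mul hac)).intervalIntegrable v w)
      ((hηc.mul continuous_const).intervalIntegrable v w),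
    intervalIntegral.integral_const, intervalIntegral.integral_const_mul,
    intervalIntegral.integral_mul_const, intervalIntegral.integral_mul_const, hA, hE, hq', ← hI]
  simp only [smul_eq_mul]; ring
end

section
/- Let a ∈ C^2(ℝ) with a'' ≥ α > 0. For u ∈ [-V, V] define M_u(v) = 1_{[0,u]}(v) for u ≥ 0 and -1_{[u,0]}(v) for u < 0, and Δ(u,ū) := ∬ 1_{v>w} (a'(v)-a'(w)) (M_u(v)-M_ū(v)) (M_u(w)-M_ū(w)) dv dw. Then Δ(u,ū) ≥ (α/6) |u - ū|³ for all u, ū ∈ [-V,V]. -/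
open Set MeasureTheory

/-- The pseudo-Maxwellian `M_u`. -/
noncomputable def pseudoMaxwellian (u : ℝ) : ℝ → ℝ :=
  fun v => if 0 ≤ u then (Set.Icc (0 : ℝ) u).indicator (fun _ => (1 : ℝ)) v
    else -((Set.Icc u (0 : ℝ)).indicator (fun _ => (1 : ℝ)) v)

lemma icc_ind (s t x : ℝ) :
    (Set.Icc s t).indicator (fun _ => (1:ℝ)) x = if s ≤ x then (if x ≤ t then 1 else 0) else 0 := by
  by_cases h1 : s ≤ x <;> by_cases h2 : x ≤ t <;>
    simp [Set.indicator_apply, Set.mem_Icc, h1, h2]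

lemma ioc_ind (s t x : ℝ) :
    (Set.Ioc s t).indicator (fun _ => (1:ℝ)) x = if s < x then (if x ≤ t then 1 else 0) else 0 := by
  by_cases h1 : s < x <;> by_cases h2 : x ≤ t <;>
    simp [Set.indicator_apply, Set.mem_Ioc, h1, h2]

set_option maxHeartbeats 1000000 in
lemma pm_diff_eq (p q : ℝ) (hpq : p ≤ q) (x : ℝ) (hx0 : x ≠ 0) (hxp : x ≠ p) (hxq : x ≠ q) :
    pseudoMaxwellian q x - pseudoMaxwellian p x
      = (Set.Ioc p q).indicator (fun _ => (1:ℝ)) x := by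
  rcases hx0.lt_or_gt with h0 | h0 <;> rcases hxp.lt_or_gt with hp | hp <;>
    rcases hxq.lt_or_gt with hq | hq <;>
  · simp only [pseudoMaxwellian, icc_ind, ioc_ind]
    split_ifs <;> linarith

lemma key_ineq (a : ℝ → ℝ) (α : ℝ) (ha : ContDiff ℝ 2 a) (hα : 0 < α)
    (hconv : ∀ v : ℝ, α ≤ iteratedDeriv 2 a v) (p q : ℝ) (hpq : p ≤ q) :
    (∫ v : ℝ, ∫ w : ℝ,
        (Set.Ioi (0 : ℝ)).indicator (fun _ => (1 : ℝ)) (v - w)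
          * (deriv a v - deriv a w)
          * (pseudoMaxwellian q v - pseudoMaxwellian p v)
          * (pseudoMaxwellian q w - pseudoMaxwellian p w))
      ≥ α / 6 * |q - p| ^ 3 := by
  have hstep := (contDiff_succ_iff_deriv (n := 1)).mp (by exact_mod_cast ha)
  have hda : Differentiable ℝ a := hstep.1
  have hg1 : ContDiff ℝ 1 (deriv a) := hstep.2.2
  have hgc : Continuous (deriv a) := hg1.continuous
  have hgd : Differentiable ℝ (deriv a) := hg1.differentiable one_ne_zero
  have hderiv2 : ∀ x, α ≤ deriv (deriv a) x := by
    intro x; have := hconv x; rwa [iteratedDeriv_succ, iteratedDeriv_one] at this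
  -- gap lemma
  have gap : ∀ w v : ℝ, w ≤ v → α * (v - w) ≤ deriv a v - deriv a w := by
    intro w v hwv
    have hd : Differentiable ℝ (fun x => deriv a x - α * x) :=
      hgd.sub (differentiable_id.const_mul α)
    have hmono : Monotone (fun x => deriv a x - α * x) := by
      refine monotone_of_deriv_nonneg hd fun x => ?_
      have h1 : HasDerivAt (fun x => deriv a x - α * x) (deriv (deriv a) x - α * 1) x :=
        (hgd x).hasDerivAt.sub ((hasDerivAt_id x).const_mul α)
      rw [h1.deriv]
      linarith [hderiv2 x]
    have := hmono hwv
    simp only at this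
    linarith
  set D : ℝ → ℝ := (Set.Ioc p q).indicator (fun _ => (1:ℝ)) with hD
  have hnull : volume ({p, q, 0} : Set ℝ) = 0 :=
    ((((Set.finite_singleton (0:ℝ)).insert q).insert p)).countable.measure_zero _
  have hae : ∀ᵐ x : ℝ, pseudoMaxwellian q x - pseudoMaxwellian p x = D x := by
    have h1 : ∀ᵐ x : ℝ, x ∉ ({p, q, 0} : Set ℝ) :=
      (MeasureTheory.measure_eq_zero_iff_ae_notMem).mp hnull
    filter_upwards [h1] with x hx
    simp only [Set.mem_insert_iff, Set.mem_singleton_iff, not_or] at hx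
    exact pm_diff_eq p q hpq x hx.2.2 hx.1 hx.2.1
  have step1 : ∀ v : ℝ, (∫ w : ℝ,
      (Set.Ioi (0 : ℝ)).indicator (fun _ => (1 : ℝ)) (v - w)
        * (deriv a v - deriv a w)
        * (pseudoMaxwellian q v - pseudoMaxwellian p v)
        * (pseudoMaxwellian q w - pseudoMaxwellian p w))
      = (pseudoMaxwellian q v - pseudoMaxwellian p v)
        * (∫ w : ℝ, (Set.Ioi (0 : ℝ)).indicator (fun _ => (1 : ℝ)) (v - w)
            * (deriv a v - deriv a w) * D w) := by
    intro v
    rw [← MeasureTheory.integral_const_mul]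
    apply integral_congr_ae
    filter_upwards [hae] with w hw
    rw [hw]; ring
  have step4 : ∀ v ∈ Set.Ioc p q,
      (∫ w : ℝ, (Set.Ioi (0 : ℝ)).indicator (fun _ => (1 : ℝ)) (v - w)
        * (deriv a v - deriv a w) * D w)
      = (v - p) * deriv a v - (a v - a p) := by
    intro v hv
    have hrw : ∀ w : ℝ, (Set.Ioi (0 : ℝ)).indicator (fun _ => (1 : ℝ)) (v - w)
        * (deriv a v - deriv a w) * D w
        = (Set.Ioo p v).indicator (fun w => deriv a v - deriv a w) w := by
      intro w
      by_cases hw1 : p < w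
      · by_cases hw2 : w < v
        · have h1 : v - w ∈ Set.Ioi (0:ℝ) := by simp only [Set.mem_Ioi]; linarith
          have h2 : w ∈ Set.Ioc p q := ⟨hw1, hw2.le.trans hv.2⟩
          have h3 : w ∈ Set.Ioo p v := ⟨hw1, hw2⟩
          rw [hD]
          rw [Set.indicator_of_mem h1, Set.indicator_of_mem h2, Set.indicator_of_mem h3]
          ring
        · have h1 : v - w ∉ Set.Ioi (0:ℝ) := by simp only [Set.mem_Ioi]; push_neg at hw2 ⊢; linarith
          have h3 : w ∉ Set.Ioo p v := fun h => hw2 h.2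
          rw [Set.indicator_of_notMem h1, Set.indicator_of_notMem h3]
          ring
      · have h2 : w ∉ Set.Ioc p q := fun h => hw1 h.1
        have h3 : w ∉ Set.Ioo p v := fun h => hw1 h.1
        rw [hD, Set.indicator_of_notMem h2, Set.indicator_of_notMem h3]
        ring
    calc (∫ w : ℝ, (Set.Ioi (0 : ℝ)).indicator (fun _ => (1 : ℝ)) (v - w)
            * (deriv a v - deriv a w) * D w)
        = ∫ w : ℝ, (Set.Ioo p v).indicator (fun w => deriv a v - deriv a w) w :=
          integral_congr_ae (Filter.Eventually.of_forall hrw)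
      _ = ∫ w in Set.Ioo p v, (deriv a v - deriv a w) :=
          MeasureTheory.integral_indicator measurableSet_Ioo
      _ = (v - p) * deriv a v - (a v - a p) := by
          rw [← MeasureTheory.integral_Ioc_eq_integral_Ioo,
            ← intervalIntegral.integral_of_le hv.1.le]
          rw [intervalIntegral.integral_sub intervalIntegrable_const
              (hgc.intervalIntegrable p v),
            intervalIntegral.integral_const,
            intervalIntegral.integral_eq_sub_of_hasDerivAt
              (fun x _ => (hda x).hasDerivAt) (hgc.intervalIntegrable p v)]
          simp [smul_eq_mul, mul_comm]
  have pointwise : ∀ v ∈ Set.Icc p q,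
      α * (v - p)^2 / 2 ≤ (v - p) * deriv a v - (a v - a p) := by
    intro v hv
    have hpv : p ≤ v := hv.1
    have e1 : (v - p) * deriv a v - (a v - a p) = ∫ w in p..v, (deriv a v - deriv a w) := by
      rw [intervalIntegral.integral_sub intervalIntegrable_const (hgc.intervalIntegrable p v),
        intervalIntegral.integral_const,
        intervalIntegral.integral_eq_sub_of_hasDerivAt
          (fun x _ => (hda x).hasDerivAt) (hgc.intervalIntegrable p v)]
      simp [smul_eq_mul, mul_comm]
    have e2 : α * (v - p)^2 / 2 = ∫ w in p..v, α * (v - w) := by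
      rw [intervalIntegral.integral_const_mul,
        intervalIntegral.integral_sub intervalIntegrable_const
          intervalIntegral.intervalIntegrable_id,
        intervalIntegral.integral_const, integral_id]
      simp only [smul_eq_mul]; ring
    rw [e1, e2]
    apply intervalIntegral.integral_mono_on hpv
    · exact (Continuous.intervalIntegrable
        (continuous_const.mul (continuous_const.sub continuous_id)) p v)
    · exact (Continuous.intervalIntegrable (continuous_const.sub hgc) p v)
    · intro w hw
      exact gap w v hw.2
  have calc1 : (∫ v : ℝ, ∫ w : ℝ,
      (Set.Ioi (0 : ℝ)).indicator (fun _ => (1 : ℝ)) (v - w)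
        * (deriv a v - deriv a w)
        * (pseudoMaxwellian q v - pseudoMaxwellian p v)
        * (pseudoMaxwellian q w - pseudoMaxwellian p w))
      = ∫ v in p..q, ((v - p) * deriv a v - (a v - a p)) := by
    calc (∫ v : ℝ, ∫ w : ℝ,
        (Set.Ioi (0 : ℝ)).indicator (fun _ => (1 : ℝ)) (v - w)
          * (deriv a v - deriv a w)
          * (pseudoMaxwellian q v - pseudoMaxwellian p v)
          * (pseudoMaxwellian q w - pseudoMaxwellian p w))
        = ∫ v : ℝ, (pseudoMaxwellian q v - pseudoMaxwellian p v)
            * (∫ w : ℝ, (Set.Ioi (0 : ℝ)).indicator (fun _ => (1 : ℝ)) (v - w)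
                * (deriv a v - deriv a w) * D w) :=
          integral_congr_ae (Filter.Eventually.of_forall step1)
      _ = ∫ v : ℝ, D v * (∫ w : ℝ, (Set.Ioi (0 : ℝ)).indicator (fun _ => (1 : ℝ)) (v - w)
                * (deriv a v - deriv a w) * D w) := by
          apply integral_congr_ae
          filter_upwards [hae] with v hv
          rw [hv]
      _ = ∫ v : ℝ, (Set.Ioc p q).indicator
            (fun v => ∫ w : ℝ, (Set.Ioi (0 : ℝ)).indicator (fun _ => (1 : ℝ)) (v - w)
                * (deriv a v - deriv a w) * D w) v := by
          apply integral_congr_ae (Filter.Eventually.of_forall fun v => ?_)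
          by_cases hv : v ∈ Set.Ioc p q <;>
            simp [hD, Set.indicator_of_mem, Set.indicator_of_notMem, hv]
      _ = ∫ v in Set.Ioc p q, (∫ w : ℝ, (Set.Ioi (0 : ℝ)).indicator (fun _ => (1 : ℝ)) (v - w)
                * (deriv a v - deriv a w) * D w) :=
          MeasureTheory.integral_indicator measurableSet_Ioc
      _ = ∫ v in Set.Ioc p q, ((v - p) * deriv a v - (a v - a p)) :=
          setIntegral_congr_fun measurableSet_Ioc step4
      _ = ∫ v in p..q, ((v - p) * deriv a v - (a v - a p)) :=
          (intervalIntegral.integral_of_le hpq).symm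
  rw [calc1, ge_iff_le, abs_of_nonneg (sub_nonneg.2 hpq)]
  have comp : (∫ v in p..q, α * (v - p)^2/2) = α / 6 * (q - p)^3 := by
    have h : (∫ v in p..q, α * (v - p)^2/2) = ∫ v in p..q, (fun x => α * x^2/2) (v - p) := by
      norm_num
    rw [h, intervalIntegral.integral_comp_sub_right (fun x => α * x^2/2) p]
    simp [intervalIntegral.integral_div, intervalIntegral.integral_const_mul, integral_pow]
    ring
  rw [← comp]
  apply intervalIntegral.integral_mono_on hpq
  · exact (Continuous.intervalIntegrable
      ((continuous_const.mul ((continuous_id.sub continuous_const).pow 2)).div_const 2) p q)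
  · exact (Continuous.intervalIntegrable
      (((continuous_id.sub continuous_const).mul hgc).sub
        ((hda.continuous).sub continuous_const)) p q)
  · exact pointwise

theorem stmt19 (a : ℝ → ℝ) (V α : ℝ)
    (ha : ContDiff ℝ 2 a) (hV : 0 < V) (hα : 0 < α)
    (hconv : ∀ v : ℝ, α ≤ iteratedDeriv 2 a v) :
    ∀ u ubar : ℝ, u ∈ Set.Icc (-V) V → ubar ∈ Set.Icc (-V) V →
      (∫ v : ℝ, ∫ w : ℝ,
          (Set.Ioi (0 : ℝ)).indicator (fun _ => (1 : ℝ)) (v - w)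
            * (deriv a v - deriv a w)
            * (pseudoMaxwellian u v - pseudoMaxwellian ubar v)
            * (pseudoMaxwellian u w - pseudoMaxwellian ubar w))
        ≥ α / 6 * |u - ubar| ^ 3 := by
  intro u ubar hu hubar
  rcases le_total ubar u with h | h
  · exact key_ineq a α ha hα hconv ubar u h
  · have hsym : (∫ v : ℝ, ∫ w : ℝ,
        (Set.Ioi (0 : ℝ)).indicator (fun _ => (1 : ℝ)) (v - w)
          * (deriv a v - deriv a w)
          * (pseudoMaxwellian u v - pseudoMaxwellian ubar v)
          * (pseudoMaxwellian u w - pseudoMaxwellian ubar w))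
        = (∫ v : ℝ, ∫ w : ℝ,
        (Set.Ioi (0 : ℝ)).indicator (fun _ => (1 : ℝ)) (v - w)
          * (deriv a v - deriv a w)
          * (pseudoMaxwellian ubar v - pseudoMaxwellian u v)
          * (pseudoMaxwellian ubar w - pseudoMaxwellian u w)) := by
      refine integral_congr_ae (Filter.Eventually.of_forall fun v => ?_)
      refine integral_congr_ae (Filter.Eventually.of_forall fun w => ?_)
      ring
    rw [hsym, show |u - ubar| = |ubar - u| from abs_sub_comm u ubar]
    exact key_ineq a α ha hα hconv u ubar h
end
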